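/- Every mixed extension of a finite game has an optimin point. Precisely: let I be a finite nonempty set of players, for each i ∈ I let X i be a finite nonempty action set and w i : (Π j, X j) → ℝ a payoff function. Let the mixed strategy set of player i be the standard simplex Δ(X i) of probability weights on X i, and let the expected utility of a mixed profile p be U i p = Σ over action profiles a of (Π j, p j (a j)) · w i a. Then there exists a mixed profile p̄ such that there is no mixed profile p with v i p ≥ v i p̄ for all i ∈ I and v j p > v j p̄ for some j ∈ I, where v is the value function of the game with strategy sets Δ(X i) and utilities U i. -/

import Mathlib

/-- The deviation set `B₋ᵢ p`. -/
def Dev {I : Type*} [DecidableEq I] {S : I → Type*}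
    (u : ∀ i : I, (∀ j, S j) → ℝ) (i : I) (p : ∀ j, S j) : Set (∀ j, S j) :=
  {q | q i = p i ∧ ∀ j, j ≠ i → (q j = p j ∨ u j (Function.update p j (q j)) > u j p)}

/-- The value of a profile `p` to player `i`. -/
noncomputable def val {I : Type*} [DecidableEq I] {S : I → Type*}
    (u : ∀ i : I, (∀ j, S j) → ℝ) (i : I) (p : ∀ j, S j) : ℝ :=
  sInf (u i '' Dev u i p)

/-- Expected utility of a mixed strategy profile in the mixed extension of a finite game. -/
noncomputable def EU {I : Type*} [Fintype I] [DecidableEq I] {X : I → Type*}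
    [∀ i, Fintype (X i)] (w : ∀ i : I, (∀ j, X j) → ℝ) (i : I)
    (p : ∀ j, (stdSimplex ℝ (X j) : Set (X j → ℝ))) : ℝ :=
  ∑ a : ∀ j, X j, (∏ j, (p j : X j → ℝ) (a j)) * w i a

/-!
A maximizer of the total value `∑ i, v i` is Pareto optimal, so it suffices that this sum attains
its maximum on the compact space of mixed profiles. That holds because each `v i` is upper
semicontinuous: if `p` admits a deviation `q ∈ B₋ᵢ p` with `U i q < y`, the deviating players still
strictly improve when they play the same strategies against any nearby `p'`, and by continuity of
`U i` the replayed deviation still yields less than `y`.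
-/

open Filter Set Topology

theorem continuous_piecewise_const {I : Type*} {S : I → Type*} [∀ j, TopologicalSpace (S j)]
    (D : Set I) [DecidablePred (· ∈ D)] (q : ∀ j, S j) :
    Continuous fun p : ∀ j, S j => D.piecewise q p := by
  refine continuous_pi fun j => ?_
  by_cases hj : j ∈ D
  · simpa only [piecewise_eq_of_mem _ _ _ hj] using continuous_const
  · simpa only [piecewise_eq_of_notMem _ _ _ hj] using continuous_apply j

section Value

variable {I : Type*} [DecidableEq I] {S : I → Type*} (u : I → (∀ j, S j) → ℝ)

theorem self_mem_Dev (i : I) (p : ∀ j, S j) : p ∈ Dev u i p :=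
  ⟨rfl, fun _ _ => Or.inl rfl⟩

variable {u}

theorem val_le_of_mem_Dev {i : I} {p q : ∀ j, S j} (hbdd : BddBelow (range (u i)))
    (hq : q ∈ Dev u i p) : val u i p ≤ u i q :=
  csInf_le (hbdd.mono (image_subset_range _ _)) (mem_image_of_mem _ hq)

theorem exists_mem_Dev_lt_of_val_lt {i : I} {p : ∀ j, S j} {y : ℝ} (hy : val u i p < y) :
    ∃ q ∈ Dev u i p, u i q < y := by
  obtain ⟨_, ⟨q, hq, rfl⟩, hqy⟩ :=
    exists_lt_of_csInf_lt ⟨_, mem_image_of_mem _ (self_mem_Dev u i p)⟩ hy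
  exact ⟨q, hq, hqy⟩

variable [Finite I] [∀ j, TopologicalSpace (S j)]

theorem eventually_piecewise_mem_Dev (hu : ∀ j, Continuous (u j)) {i : I} {p q : ∀ j, S j}
    {D : Set I} [DecidablePred (· ∈ D)] (hiD : i ∉ D)
    (hD : ∀ j ∈ D, u j (Function.update p j (q j)) > u j p) :
    ∀ᶠ p' in 𝓝 p, D.piecewise q p' ∈ Dev u i p' := by
  have hstrict : ∀ᶠ p' in 𝓝 p, ∀ j ∈ D, u j (Function.update p' j (q j)) > u j p' := by
    refine eventually_all.2 fun j => ?_
    by_cases hj : j ∈ D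
    · have hcont : Continuous fun p' : ∀ j, S j => u j (Function.update p' j (q j)) :=
        (hu j).comp (continuous_id.update j continuous_const)
      filter_upwards [(hu j).continuousAt.eventually_lt hcont.continuousAt (hD j hj)]
        with p' hp' _ using hp'
    · exact Eventually.of_forall fun _ hj' => absurd hj' hj
  filter_upwards [hstrict] with p' hp'
  refine ⟨piecewise_eq_of_notMem _ _ _ hiD, fun j _ => ?_⟩
  by_cases hj : j ∈ D
  · exact Or.inr (by simpa only [piecewise_eq_of_mem _ _ _ hj] using hp' j hj)
  · exact Or.inl (piecewise_eq_of_notMem _ _ _ hj)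

theorem upperSemicontinuous_val (hu : ∀ j, Continuous (u j)) {i : I}
    (hbdd : BddBelow (range (u i))) : UpperSemicontinuous (val u i) := by
  classical
  intro p y hy
  obtain ⟨q, hq, hqy⟩ := exists_mem_Dev_lt_of_val_lt hy
  set D : Set I := {j | q j ≠ p j}
  have hiD : i ∉ D := fun h => h hq.1
  have hD : ∀ j ∈ D, u j (Function.update p j (q j)) > u j p := fun j hj =>
    (hq.2 j fun hji => hiD (hji ▸ hj)).resolve_left hj
  have hqD : D.piecewise q p = q := by
    funext j
    by_cases hj : j ∈ D
    · exact piecewise_eq_of_mem _ _ _ hj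
    · rw [piecewise_eq_of_notMem _ _ _ hj]; exact (not_not.1 hj).symm
  have hlow : ∀ᶠ p' in 𝓝 p, u i (D.piecewise q p') < y :=
    ((hu i).comp (continuous_piecewise_const D q)).continuousAt.eventually_lt continuousAt_const
      (by simpa only [Function.comp_apply, hqD] using hqy)
  filter_upwards [eventually_piecewise_mem_Dev hu hiD hD, hlow] with p' hdev hp'
  exact (val_le_of_mem_Dev hbdd hdev).trans_lt hp'

end Value

section Mixed

variable {I : Type*} [Fintype I] [DecidableEq I] {X : I → Type*} [∀ i, Fintype (X i)]

theorem continuous_EU (w : I → (∀ j, X j) → ℝ) (i : I) : Continuous (EU w i) :=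
  continuous_finsetSum _ fun a _ => .mul (continuous_finsetProd _ fun j _ =>
    (continuous_apply (a j)).comp (continuous_subtype_val.comp (continuous_apply j)))
    continuous_const

theorem upperSemicontinuous_val_EU (w : I → (∀ j, X j) → ℝ) (i : I) :
    UpperSemicontinuous (val (EU w) i) :=
  upperSemicontinuous_val (continuous_EU w) (isCompact_range (continuous_EU w i)).bddBelow

end Mixed

theorem exists_optimin_mixed_general {I : Type*} [Fintype I] [DecidableEq I]
    {X : I → Type*} [∀ i, Fintype (X i)] [∀ i, Nonempty (X i)]
    (w : ∀ i : I, (∀ j, X j) → ℝ) :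
    ∃ pbar : ∀ j, (stdSimplex ℝ (X j) : Set (X j → ℝ)),
      ¬ ∃ p : ∀ j, (stdSimplex ℝ (X j) : Set (X j → ℝ)),
        (∀ i, val (EU w) i pbar ≤ val (EU w) i p) ∧
        ∃ j, val (EU w) j pbar < val (EU w) j p := by
  obtain ⟨pbar, -, hmax⟩ :=
    (upperSemicontinuous_sum (a := Finset.univ) fun i _ => upperSemicontinuous_val_EU w i)
      |>.upperSemicontinuousOn univ |>.exists_isMaxOn univ_nonempty isCompact_univ
  refine ⟨pbar, fun ⟨p, hle, j, hlt⟩ => ?_⟩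
  exact (hmax (mem_univ p)).not_gt
    (Finset.sum_lt_sum (fun i _ => hle i) ⟨j, Finset.mem_univ j, hlt⟩)

/-- Every mixed extension of a finite game has an optimin point. -/
theorem exists_optimin_mixed {I : Type*} [Fintype I] [Nonempty I] [DecidableEq I]
    {X : I → Type*} [∀ i, Fintype (X i)] [∀ i, Nonempty (X i)]
    (w : ∀ i : I, (∀ j, X j) → ℝ) :
    ∃ pbar : ∀ j, (stdSimplex ℝ (X j) : Set (X j → ℝ)),
      ¬ ∃ p : ∀ j, (stdSimplex ℝ (X j) : Set (X j → ℝ)),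
        (∀ i, val (EU w) i pbar ≤ val (EU w) i p) ∧
        ∃ j, val (EU w) j pbar < val (EU w) j p :=
  exists_optimin_mixed_general w
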